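/- In every finite sequential game, every Subgame Perfect Equilibrium is a terminal profile of the SI-dynamics: if s* is an SPE then there is no s' with s* ⇀_{SI} s'. -/

import Mathlib

namespace SeqGame

inductive GameTree (N O : Type) : Type where
  | leaf (o : O) : GameTree N O
  | node (i : N) (children : List (GameTree N O)) : GameTree N O

namespace GameTree

variable {N O : Type}

/-- The subtree of `T` at position `p` (a list of child indices), if it exists. -/
def subtree : GameTree N O → List ℕ → Option (GameTree N O)
  | t, [] => some t
  | leaf _, _ :: _ => none
  | node _ c, k :: p =>
    match getElem? c k with
    | some t => subtree t p
    | none => none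

/-- A strategy profile: a choice of a child index at every position. -/
abbrev Profile := List ℕ → ℕ

/-- A profile is legal if it chooses an existing child at every internal node. -/
def Legal (T : GameTree N O) (s : Profile) : Prop :=
  ∀ p i c, T.subtree p = some (node i c) → s p < c.length

/-- The profiles `s` and `s'` differ at the (valid, internal) node `p`. -/
def Differs (T : GameTree N O) (s s' : Profile) (p : List ℕ) : Prop :=
  (∃ i c, T.subtree p = some (node i c)) ∧ s p ≠ s' p

/-- The outcome reached when playing according to the profile `s`. -/
def outcome : GameTree N O → Profile → Option O
  | leaf o, _ => some o
  | node _ c, s =>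
    match h : getElem? c (s []) with
    | some t => outcome t (fun p => s (s [] :: p))
    | none => none
decreasing_by
  have hm : t ∈ c := by
    exact List.mem_of_getElem? h
  have := List.sizeOf_lt_of_mem hm
  simp only [node.sizeOf_spec]
  omega

/-- The profile `s` re-rooted at position `p`. -/
def shift (s : Profile) (p : List ℕ) : Profile := fun q => s (p ++ q)

/-- The owner of the node at position `p`, if it is internal. -/
def ownerAt (T : GameTree N O) (p : List ℕ) : Option N :=
  match T.subtree p with
  | some (node i _) => some i
  | _ => none

/-- `p` lies along the play induced by `s`. -/
def OnPlay (s : Profile) (p : List ℕ) : Prop :=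
  ∀ q k, (q ++ [k]) <+: p → s q = k

/-- Improvement property: every player who changes strictly improves the outcome. -/
def Iprop (T : GameTree N O) (pref : N → O → O → Prop) (s s' : Profile) : Prop :=
  ∀ p i c, T.subtree p = some (node i c) → s p ≠ s' p →
    ∃ x y, T.outcome s = some x ∧ T.outcome s' = some y ∧ pref i x y

/-- Subgame improvement property. -/
def SIprop (T : GameTree N O) (pref : N → O → O → Prop) (s s' : Profile) : Prop :=
  ∀ p i c, T.subtree p = some (node i c) → s p ≠ s' p →
    ∃ x y, outcome (node i c) (shift s p) = some x ∧
      outcome (node i c) (shift s' p) = some y ∧ pref i x y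

/-- Laziness property: all changed nodes lie along the play induced by `s'`. -/
def Lprop (T : GameTree N O) (s s' : Profile) : Prop :=
  ∀ p, Differs T s s' p → OnPlay s' p

/-- One player property: at most one player changes his strategy. -/
def P1prop (T : GameTree N O) (s s' : Profile) : Prop :=
  ∃ i : N, ∀ p, Differs T s s' p → T.ownerAt p = some i

/-- Atomicity property: at most one node changes. -/
def Aprop (T : GameTree N O) (s s' : Profile) : Prop :=
  ∀ p q, Differs T s s' p → Differs T s s' q → p = q

/-- Names of the update properties. -/
inductive Upd : Type | I | SI | L | P1 | A
deriving DecidableEq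

/-- Interpretation of an update property name. -/
def holds (T : GameTree N O) (pref : N → O → O → Prop) : Upd → Profile → Profile → Prop
  | .I => Iprop T pref
  | .SI => SIprop T pref
  | .L => Lprop T
  | .P1 => P1prop T
  | .A => Aprop T

/-- The X-dynamics: an actual update (between legal profiles) satisfying
all properties in `X`. -/
def XDyn (X : Set Upd) (T : GameTree N O) (pref : N → O → O → Prop)
    (s s' : Profile) : Prop :=
  Legal T s ∧ Legal T s' ∧ (∃ p, Differs T s s' p) ∧ ∀ u ∈ X, holds T pref u s s'

/-- A dynamics terminates iff there is no infinite update sequence. -/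
def Terminates (D : Profile → Profile → Prop) : Prop :=
  ¬ ∃ f : ℕ → Profile, ∀ n, D (f n) (f (n + 1))

/-- `s'` is a deviation from `s` by the coalition `I`. -/
def Deviation (T : GameTree N O) (I : Set N) (s s' : Profile) : Prop :=
  Legal T s' ∧ ∀ p i c, T.subtree p = some (node i c) → i ∉ I → s p = s' p

/-- Nash equilibrium. -/
def IsNE (T : GameTree N O) (pref : N → O → O → Prop) (s : Profile) : Prop :=
  ∀ i s', Deviation T {i} s s' →
    ∀ x y, T.outcome s = some x → T.outcome s' = some y → ¬ pref i x y

/-- Subgame perfect equilibrium: an NE in every subgame. -/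
def IsSPE (T : GameTree N O) (pref : N → O → O → Prop) (s : Profile) : Prop :=
  ∀ p t, T.subtree p = some t → IsNE t pref (shift s p)

/-- Strong Nash equilibrium (Aumann). -/
def IsSNE (T : GameTree N O) (pref : N → O → O → Prop) (s : Profile) : Prop :=
  ∀ I : Set N, I.Nonempty → ∀ s', Deviation T I s s' →
    ∃ i ∈ I, ∀ x y, T.outcome s = some x → T.outcome s' = some y → ¬ pref i x y

/-- A relation is acyclic if it has no cycle. -/
def Acyclic (r : O → O → Prop) : Prop := ∀ x, ¬ Relation.TransGen r x x

/-- Incomparability. -/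
def Incomp (r : O → O → Prop) (x y : O) : Prop := ¬ r x y ∧ ¬ r y x

/-- Strict weak order: irreflexive, transitive, with transitive incomparability. -/
def IsSWO (r : O → O → Prop) : Prop :=
  (∀ x, ¬ r x x) ∧ (∀ x y z, r x y → r y z → r x z) ∧
    (∀ x y z, Incomp r x y → Incomp r y z → Incomp r x z)

/-- Strict linear order: irreflexive, transitive and total. -/
def IsSLO (r : O → O → Prop) : Prop :=
  (∀ x, ¬ r x x) ∧ (∀ x y z, r x y → r y z → r x z) ∧
    (∀ x y, x ≠ y → r x y ∨ r y x)

/-- Absence of the main pattern. -/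
def OutOfMainPattern (pref : N → O → O → Prop) : Prop :=
  ∀ (i j : N) (x y z : O),
    ¬ (pref i x y ∧ pref i y z ∧ pref j y z ∧ pref j z x)

/-- Absence of the secondary pattern. -/
def OutOfSecondaryPattern (pref : N → O → O → Prop) : Prop :=
  ∀ (i j : N) (w x y z : O),
    ¬ (pref i w x ∧ pref i x y ∧ pref i y z ∧
       Incomp (pref j) x z ∧ pref j z w ∧ Incomp (pref j) w y)

/-- Absence of both patterns. -/
def OutOfPattern (pref : N → O → O → Prop) : Prop :=
  OutOfMainPattern pref ∧ OutOfSecondaryPattern pref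

/-- The preferences can be layered: there is an ordered partition of the
outcomes (given by a layer-index function) such that higher layers are
unanimously weakly preferred, and within a layer no two players agree on
one pair while disagreeing on another pair. -/
def CanBeLayered (pref : N → O → O → Prop) : Prop :=
  ∃ ℓ : O → ℕ,
    (∀ x y, ℓ x < ℓ y → ∀ i, ¬ pref i y x) ∧
    (∀ (i j : N) (w x y z : O), ℓ w = ℓ x → ℓ x = ℓ y → ℓ y = ℓ z →
      ¬ (pref i x y ∧ pref j x y ∧ pref i w z ∧ pref j z w))

end GameTree
end SeqGame

/-!
Take a deepest node `p` at which `s` and `s'` differ. Below `p` the two profiles agree, so in the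
subgame at `p` the profile `s'` is a unilateral deviation of the owner `i` of `p`. The SI property
says that `i` strictly gains by it, which contradicts `s` being a Nash equilibrium of that subgame.
-/

namespace SeqGame.GameTree

variable {N O : Type}

theorem subtree_append (T : GameTree N O) (p q : List ℕ) :
    T.subtree (p ++ q) = (T.subtree p).bind (·.subtree q) := by
  induction p generalizing T with
  | nil => simp [subtree]
  | cons k p ih =>
    cases T with
    | leaf o => simp [subtree]
    | node i c =>
      simp only [List.cons_append, subtree]
      cases getElem? c k with
      | none => simp
      | some t => simpa using ih t

theorem length_le_sizeOf_of_subtree_eq_some {T t : GameTree N O} {p : List ℕ}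
    (h : T.subtree p = some t) : p.length ≤ sizeOf T := by
  induction p generalizing T with
  | nil => simp
  | cons k p ih =>
    cases T with
    | leaf o => simp [subtree] at h
    | node i c =>
      simp only [subtree] at h
      cases hc : getElem? c k with
      | none => simp [hc] at h
      | some u =>
        rw [hc] at h
        have hu : sizeOf u < sizeOf c := List.sizeOf_lt_of_mem (List.mem_of_getElem? hc)
        have := ih h
        simp only [List.length_cons, node.sizeOf_spec]
        omega

theorem Legal.shift {T t : GameTree N O} {s : Profile} {p : List ℕ} (hs : Legal T s)
    (hp : T.subtree p = some t) : Legal t (shift s p) := fun q i c hq =>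
  hs (p ++ q) i c (by rw [subtree_append, hp]; exact hq)

theorem exists_deepest_differs {T : GameTree N O} {s s' : Profile}
    (h : ∃ p, Differs T s s' p) :
    ∃ p, Differs T s s' p ∧ ∀ q, Differs T s s' q → q.length ≤ p.length := by
  set A : Set ℕ := {n | ∃ p, Differs T s s' p ∧ p.length = n}
  have hA : BddAbove A := by
    refine ⟨sizeOf T, ?_⟩
    rintro _ ⟨p, ⟨⟨i, c, hp⟩, -⟩, rfl⟩
    exact length_le_sizeOf_of_subtree_eq_some hp
  obtain ⟨p₀, hp₀⟩ := h
  obtain ⟨p, hp, hlen⟩ : sSup A ∈ A := Nat.sSup_mem ⟨p₀.length, p₀, hp₀, rfl⟩ hA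
  exact ⟨p, hp, fun q hq => hlen ▸ le_csSup hA ⟨q, hq, rfl⟩⟩

theorem deviation_shift_of_deepest {T : GameTree N O} {s s' : Profile} {p : List ℕ} {i : N}
    {c : List (GameTree N O)} (hp : T.subtree p = some (node i c)) (hs' : Legal T s')
    (hdeep : ∀ q, Differs T s s' q → q.length ≤ p.length) :
    Deviation (node i c) {i} (shift s p) (shift s' p) := by
  refine ⟨hs'.shift hp, fun q j d hq hj => ?_⟩
  cases q with
  | nil =>
    simp only [subtree, Option.some.injEq, node.injEq] at hq
    exact absurd hq.1.symm hj
  | cons k q =>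
    by_contra hne
    have hdiff : Differs T s s' (p ++ k :: q) :=
      ⟨⟨j, d, by rw [subtree_append, hp]; exact hq⟩, hne⟩
    simpa using hdeep _ hdiff

end SeqGame.GameTree

open SeqGame GameTree in
theorem stmt_3_general {N O : Type} (T : GameTree N O) (pref : N → O → O → Prop)
    (s : Profile) (hspe : IsSPE T pref s) :
    ∀ s', ¬ XDyn {Upd.SI} T pref s s' := by
  rintro s' ⟨-, hs', hdiff, hprops⟩
  obtain ⟨p, ⟨⟨i, c, hp⟩, hne⟩, hdeep⟩ := exists_deepest_differs hdiff
  have hSI : SIprop T pref s s' := hprops Upd.SI rfl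
  obtain ⟨x, y, hx, hy, hxy⟩ := hSI p i c hp hne
  exact hspe p _ hp i _ (deviation_shift_of_deepest hp hs' hdeep) x y hx hy hxy

open SeqGame GameTree in
/-- Every subgame perfect equilibrium is a terminal profile of the SI-dynamics. -/
theorem stmt_3 {N O : Type} (T : GameTree N O) (pref : N → O → O → Prop)
    (s : Profile) (hs : Legal T s) (hspe : IsSPE T pref s) :
    ∀ s', ¬ XDyn {Upd.SI} T pref s s' :=
  stmt_3_general T pref s hspe
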